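/- Let ν = 10(c_3…c_{n+2})^∞ with #_1(c_3…c_{n+2}) odd and c_{n+2} = 1. Assume c_{n+1} = 1 and that c_j^* c_{j+1}…c_{n+2}(c_3…c_{n+2})^M c_3…c_i is admissible for every j ∈ {3,…,n+1}, every M ∈ ℕ and relevant i. Then there exists no left-infinite sequence L making any folding point of X' a Type 3 folding point; in particular the candidate sequence L = (c_3…c_n 0 0)^∞ l_k…l_1 contains the non-admissible subword 0 0 c_3…c_n. -/

import Mathlib

/-- number of `true`s among `s 0, …, s (k-1)` (i.e. `#₁(s_k … s_1)` for a
left-infinite sequence `…s₂s₁` coded by `s : ℕ → Bool` with `s 0 = s₁`). -/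
def cnt (s : ℕ → Bool) (k : ℕ) : ℕ :=
  ((Finset.range k).filter (fun i => s i = true)).card

/-- parity-lexicographic strict order on finite binary words. -/
def plLt (s t : List Bool) : Prop :=
  ∃ k, k < s.length ∧ k < t.length ∧ s.take k = t.take k ∧
    s.getD k false ≠ t.getD k false ∧
    ((s.getD k false = false ∧ Even ((s.take k).count true)) ∨
     (s.getD k false = true ∧ Odd ((s.take k).count true)))

def plLe (s t : List Bool) : Prop := s = t ∨ plLt s t

/-- the word `c_{start+1} … c_{start+len}` of the kneading sequence `ν`
(where `c_{i+1} = ν i`). -/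
def nuWord (ν : ℕ → Bool) (start len : ℕ) : List Bool :=
  (List.range len).map (fun j => ν (start + j))

/-- `a = a₁…a_n` is admissible w.r.t. the kneading sequence `ν`:
`c₂…c_{2+n-i} ⪯ a_i…a_n ⪯ c₁…c_{1+n-i}` for all `i`. -/
def AdmissibleWord (ν : ℕ → Bool) (a : List Bool) : Prop :=
  ∀ i, i < a.length →
    plLe (nuWord ν 1 (a.length - i)) (a.drop i) ∧
    plLe (a.drop i) (nuWord ν 0 (a.length - i))

/-- `ν` is an admissible kneading sequence: all of its finite subwords are admissible. -/
def AdmissibleSeq (ν : ℕ → Bool) : Prop :=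
  ∀ k len, AdmissibleWord ν (nuWord ν k len)

/-- the finite subword `s_{k+len} … s_{k+1}` (read forward in time, i.e. with
decreasing index) of the left-infinite sequence `…s₂s₁` coded by `s` (`s 0 = s₁`). -/
def leftWord (s : ℕ → Bool) (k len : ℕ) : List Bool :=
  ((List.range len).map (fun j => s (k + j))).reverse

/-- a left-infinite sequence is admissible iff all of its finite subwords are. -/
def AdmissibleLeft (ν : ℕ → Bool) (s : ℕ → Bool) : Prop :=
  ∀ k len, AdmissibleWord ν (leftWord s k len)

/-- the order `≺_L` on left-infinite sequences determined by `L = …l₂l₁`. -/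
def ltL (L s t : ℕ → Bool) : Prop :=
  ∃ k, (∀ i, i < k → s i = t i) ∧ s k ≠ t k ∧
    ((t k = L k ∧ Even (cnt s k + cnt L k)) ∨
     (s k = L k ∧ ¬ Even (cnt s k + cnt L k)))

/-- the forward word `c_j^* c_{j+1}…c_{n+2} (c_3…c_{n+2})^t c_3…c_{r+2}`
(itinerary suffix of a "long" basic arc near the folding point). -/
def fwLong (ν : ℕ → Bool) (n j t r : ℕ) : List Bool :=
  [!(ν (j - 1))] ++ nuWord ν j (n + 2 - j) ++
    (List.replicate t (nuWord ν 2 n)).flatten ++ nuWord ν 2 r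

/-- the forward word `0 (c_3…c_{n+2})^t c_3…c_{r+2}`
(itinerary suffix of a "left/right" basic arc near the folding point). -/
def fwSide (ν : ℕ → Bool) (n t r : ℕ) : List Bool :=
  [false] ++ (List.replicate t (nuWord ν 2 n)).flatten ++ nuWord ν 2 r

/-- the left-infinite sequence `…s₂s₁` ends (on the right) with the forward word `w`. -/
def EndsWithWord (t : ℕ → Bool) (w : List Bool) : Prop :=
  ∀ j, j < w.length → t j = w.getD (w.length - 1 - j) true

/-- the backward itinerary `(c_3…c_{n+2})^∞ c_3…c_{r+2}` of the folding point `p`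
(where `i = r + 2`). -/
def pseq (ν : ℕ → Bool) (n r : ℕ) : ℕ → Bool :=
  fun j => ν (2 + (((r : ℤ) - 1 - (j : ℤ)) % (n : ℤ)).toNat)

/-- the symbolic characterization of a Type 3 folding point (Lemma 7.15):
there is `M > 0` such that all long basic arcs near `A(←p)` lie on one side of it
(w.r.t. `≺_L`), while the side arcs `…0(c_3…c_{n+2})^{M+N'}c_3…c_i` lie on the
other side for infinitely many even and infinitely many odd `N'`
(or the same with all inequalities reversed). -/
def Type3Cond (ν : ℕ → Bool) (n : ℕ) (L : ℕ → Bool) (r : ℕ) : Prop :=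
  ∃ M : ℕ, 0 < M ∧
    (((∀ N j, 1 ≤ N → 3 ≤ j → j ≤ n + 1 → AdmissibleWord ν (fwLong ν n j (M + N) r) →
        ∀ t, AdmissibleLeft ν t → EndsWithWord t (fwLong ν n j (M + N) r) →
          ltL L t (pseq ν n r)) ∧
      (∀ N0, ∃ N', N0 ≤ N' ∧ Even N' ∧
        ∀ t, AdmissibleLeft ν t → EndsWithWord t (fwSide ν n (M + N') r) →
          ltL L (pseq ν n r) t) ∧
      (∀ N0, ∃ N', N0 ≤ N' ∧ Odd N' ∧
        ∀ t, AdmissibleLeft ν t → EndsWithWord t (fwSide ν n (M + N') r) →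
          ltL L (pseq ν n r) t)) ∨
     ((∀ N j, 1 ≤ N → 3 ≤ j → j ≤ n + 1 → AdmissibleWord ν (fwLong ν n j (M + N) r) →
        ∀ t, AdmissibleLeft ν t → EndsWithWord t (fwLong ν n j (M + N) r) →
          ltL L (pseq ν n r) t) ∧
      (∀ N0, ∃ N', N0 ≤ N' ∧ Even N' ∧
        ∀ t, AdmissibleLeft ν t → EndsWithWord t (fwSide ν n (M + N') r) →
          ltL L t (pseq ν n r)) ∧
      (∀ N0, ∃ N', N0 ≤ N' ∧ Odd N' ∧
        ∀ t, AdmissibleLeft ν t → EndsWithWord t (fwSide ν n (M + N') r) →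
          ltL L t (pseq ν n r))))

/-!
If `t` agrees with `p = ←p` below position `k` and differs from it at `k`, whether `t ≺_L p`
does not depend on `t`: it holds iff `L k = p k` exactly when `cnt p k + cnt L k` is even
(`FlipLt L p k`). Passing from `k` to `k + 1` this truth value is kept iff `L (k + 1) = p (k + 1)`.
Testing the Type 3 inequalities on the admissible sequences `…111w`, for the long and side words
`w`, shows that `FlipLt` has one value at the departure positions of all long arcs far out and
the other value at the departure position of some side arc. The long arcs depart at the `n - 1`
positions just below that side-arc position and at the one just above it, so `L` agrees with
`p = …c₃…c_{n+2}…` at `n - 2` consecutive positions and disagrees with it at the next two,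
where `p` reads `c_{n+1}c_{n+2} = 11`. Hence `L` contains `00c₃…cₙ`, which lies below
`c₂c₃…c_{n+1} = 0c₃…c_{n+1}` because `c_{n+1} = 1`, so it is not admissible.
-/

section ParityLex

theorem getD_eq_of_take_eq {α : Type*} {s t : List α} {i k : ℕ} (hik : i < k)
    (h : s.take k = t.take k) (d : α) : s.getD i d = t.getD i d := by
  simpa [List.getD_eq_getElem?_getD, List.getElem?_take, hik] using
    congrArg (fun l => l.getD i d) h

theorem plLt_asymm {s t : List Bool} (hst : plLt s t) : ¬ plLt t s := by
  rintro ⟨k', -, -, htake', hne', hc'⟩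
  obtain ⟨k, -, -, htake, hne, hc⟩ := hst
  rcases lt_trichotomy k k' with h | rfl | h
  · exact hne (getD_eq_of_take_eq h htake'.symm false)
  · rw [htake] at hc
    revert hne hc hc'
    cases s.getD k false <;> cases t.getD k false <;> simp [← Nat.not_even_iff_odd]
  · exact hne' (getD_eq_of_take_eq h htake.symm false)

theorem not_plLe_of_plLt {s t : List Bool} (h : plLt s t) : ¬ plLe t s := by
  rintro (rfl | h')
  · obtain ⟨k, -, -, -, hne, -⟩ := h
    exact hne rfl
  · exact plLt_asymm h h'

theorem plLt_cons_true {s t : List Bool} (h : plLt s t) : plLt (true :: t) (true :: s) := by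
  obtain ⟨k, hks, hkt, htake, hne, hc⟩ := h
  refine ⟨k + 1, by simpa using hkt, by simpa using hks, by simp [htake],
    by simpa using hne.symm, ?_⟩
  simp only [List.getD_cons_succ, List.take_succ_cons, List.count_cons_self, ← htake,
    Nat.even_add_one, Nat.odd_add_one, Nat.not_even_iff_odd, Nat.not_odd_iff_even]
  revert hne hc
  cases s.getD k false <;> cases t.getD k false <;> simp

theorem plLe_cons_true {s t : List Bool} (h : plLe s t) : plLe (true :: t) (true :: s) :=
  h.imp (fun h => by rw [h]) plLt_cons_true

theorem plLe_take {s t : List Bool} (h : plLe s t) (m : ℕ) : plLe (s.take m) (t.take m) := by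
  rcases h with rfl | ⟨k, hks, hkt, htake, hne, hc⟩
  · exact Or.inl rfl
  rcases lt_or_ge k m with hkm | hkm
  · right
    refine ⟨k, by simp [hks, hkm], by simp [hkt, hkm], by simp [List.take_take, hkm.le, htake],
      ?_⟩
    simpa [List.getD_eq_getElem?_getD, List.getElem?_take, hkm, List.take_take, hkm.le] using
      And.intro hne hc
  · left
    rw [← min_eq_left hkm, ← List.take_take, htake, List.take_take]

end ParityLex

section Admissible

variable {ν : ℕ → Bool}

theorem nuWord_length (ν : ℕ → Bool) (s ℓ : ℕ) : (nuWord ν s ℓ).length = ℓ := by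
  simp [nuWord]

theorem nuWord_succ (ν : ℕ → Bool) (s ℓ : ℕ) :
    nuWord ν s (ℓ + 1) = ν s :: nuWord ν (s + 1) ℓ := by
  simp only [nuWord, List.range_succ_eq_map, List.map_cons, List.map_map, Nat.add_zero]
  congr 1
  exact List.map_congr_left fun i _ => congrArg ν (by omega)

theorem nuWord_take (ν : ℕ → Bool) (s ℓ m : ℕ) :
    (nuWord ν s ℓ).take m = nuWord ν s (min m ℓ) := by
  simp [nuWord, ← List.map_take, List.take_range]

theorem AdmissibleWord.drop {a : List Bool} (h : AdmissibleWord ν a) (i : ℕ) :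
    AdmissibleWord ν (a.drop i) := by
  intro i' hi'
  rw [List.length_drop] at hi'
  simpa [List.drop_drop, Nat.sub_sub] using h (i + i') (by omega)

theorem AdmissibleWord.take {a : List Bool} (h : AdmissibleWord ν a) (m : ℕ) :
    AdmissibleWord ν (a.take m) := by
  intro i hi
  rw [List.length_take] at hi
  obtain ⟨hlo, hhi⟩ := h i (by omega)
  have hmin : min (m - i) (a.length - i) = min m a.length - i := by omega
  have hlo := plLe_take hlo (m - i)
  have hhi := plLe_take hhi (m - i)
  rw [nuWord_take, hmin] at hlo hhi
  rw [List.length_take, List.drop_take]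
  exact ⟨hlo, hhi⟩

/-- Since `ν` starts with `10`, the word `1a` lies above `c₂… = 0…`, and it lies below
`ν = 1c₂…` because the leading `1` flips the parity and `a` lies above `c₂…`. -/
theorem AdmissibleWord.cons_true (h0 : ν 0 = true) (h1 : ν 1 = false)
    {a : List Bool} (h : AdmissibleWord ν a) : AdmissibleWord ν (true :: a) := by
  rintro (_ | i) hi
  · refine ⟨Or.inr ⟨0, by simp [nuWord_length], by simp, by simp, ?_, ?_⟩, ?_⟩
    · simp [nuWord, h1]
    · simp [nuWord, h1]
    · rw [List.drop_zero, List.length_cons, Nat.sub_zero, nuWord_succ, h0]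
      rcases a with _ | ⟨x, a⟩
      · exact Or.inl rfl
      · exact plLe_cons_true (by simpa using (h 0 (by simp)).1)
  · simpa using h i (by simpa using hi)

end Admissible

section PadTrue

variable {ν : ℕ → Bool}

/-- The left-infinite sequence `…111w`. -/
def padTrue (w : List Bool) (j : ℕ) : Bool := w.reverse.getD j true

theorem endsWithWord_padTrue (w : List Bool) : EndsWithWord (padTrue w) w :=
  fun j hj => congrFun (List.getD_reverse j hj) true

theorem padTrue_cons_of_lt {b : Bool} {u : List Bool} {i : ℕ} (hi : i < u.length) :
    padTrue (b :: u) i = padTrue u i := by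
  simp [padTrue, List.getD_eq_getElem?_getD, List.getElem?_append_left, hi]

theorem padTrue_cons_length (b : Bool) (u : List Bool) : padTrue (b :: u) u.length = b := by
  simp [padTrue, List.getD_eq_getElem?_getD]

theorem padTrue_nuWord {s ℓ i : ℕ} (hi : i < ℓ) :
    padTrue (nuWord ν s ℓ) i = ν (s + (ℓ - 1 - i)) := by
  rw [padTrue, List.getD_reverse i (by simpa [nuWord_length] using hi)]
  simp [nuWord, List.getD_eq_getElem?_getD, show ℓ - 1 - i < ℓ by omega]

theorem leftWord_succ (s : ℕ → Bool) (k len : ℕ) :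
    leftWord s k (len + 1) = s (k + len) :: leftWord s k len := by
  simp [leftWord, List.range_succ]

theorem leftWord_padTrue {w : List Bool} {k len : ℕ} (h : k + len ≤ w.length) :
    leftWord (padTrue w) k len = (w.take (w.length - k)).drop (w.length - k - len) := by
  apply List.ext_getElem
  · simp [leftWord]; omega
  · intro i hi _
    simp only [leftWord, List.length_reverse, List.length_map, List.length_range] at hi
    simp [leftWord, padTrue, List.getElem_reverse, List.getD_eq_getElem?_getD,
      show k + (len - 1 - i) < w.length by omega]
    congr 1
    omega

theorem admissibleLeft_padTrue (h0 : ν 0 = true) (h1 : ν 1 = false)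
    {w : List Bool} (hw : AdmissibleWord ν w) : AdmissibleLeft ν (padTrue w) := by
  intro k len
  induction len with
  | zero => intro i hi; simp [leftWord] at hi
  | succ len ih =>
    rcases lt_or_ge (k + len) w.length with hlt | hle
    · rw [leftWord_padTrue (by omega)]
      exact (hw.take _).drop _
    · have : padTrue w (k + len) = true := by
        simp [padTrue, List.getD_eq_getElem?_getD, hle]
      rw [leftWord_succ, this]
      exact ih.cons_true h0 h1

end PadTrue

section TwistedOrder

theorem cnt_succ (s : ℕ → Bool) (k : ℕ) :
    cnt s (k + 1) = cnt s k + (if s k then 1 else 0) := by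
  unfold cnt
  rw [Finset.range_add_one, Finset.filter_insert]
  by_cases h : s k <;> simp [h, Finset.card_insert_of_notMem]

theorem cnt_congr {s t : ℕ → Bool} {k : ℕ} (h : ∀ i < k, s i = t i) : cnt s k = cnt t k := by
  unfold cnt
  congr 1
  exact Finset.filter_congr fun i hi => by rw [h i (Finset.mem_range.mp hi)]

theorem ltL_iff_of_firstDiff {L s t : ℕ → Bool} {k : ℕ} (hag : ∀ i < k, s i = t i)
    (hne : s k ≠ t k) : ltL L s t ↔ (L k = t k ↔ Even (cnt s k + cnt L k)) := by
  constructor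
  · rintro ⟨k', hag', hne', hc⟩
    obtain rfl : k' = k := by
      rcases lt_trichotomy k' k with h | h | h
      · exact absurd (hag k' h) hne'
      · exact h
      · exact absurd (hag' k h) hne
    revert hne hc
    cases s k' <;> cases t k' <;> cases L k' <;> simp
  · intro h
    refine ⟨k, hag, hne, ?_⟩
    revert hne h
    cases s k <;> cases t k <;> cases L k <;> simp

/-- `FlipLt L p k`: every sequence that first differs from `p` at `k` is `≺_L`-below `p`. -/
def FlipLt (L p : ℕ → Bool) (k : ℕ) : Prop := (L k = p k ↔ Even (cnt p k + cnt L k))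

theorem ltL_iff_flipLt {L t p : ℕ → Bool} {k : ℕ} (hag : ∀ i < k, t i = p i)
    (hne : t k ≠ p k) : ltL L t p ↔ FlipLt L p k := by
  rw [ltL_iff_of_firstDiff hag hne, cnt_congr hag, FlipLt]

theorem ltL_iff_not_flipLt {L t p : ℕ → Bool} {k : ℕ} (hag : ∀ i < k, t i = p i)
    (hne : t k ≠ p k) : ltL L p t ↔ ¬ FlipLt L p k := by
  rw [ltL_iff_of_firstDiff (fun i hi => (hag i hi).symm) hne.symm, FlipLt]
  revert hne
  cases t k <;> cases p k <;> cases L k <;> simp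

theorem even_cnt_add_cnt_succ (p L : ℕ → Bool) (k : ℕ) :
    Even (cnt p (k + 1) + cnt L (k + 1)) ↔ (Even (cnt p k + cnt L k) ↔ L k = p k) := by
  rw [cnt_succ, cnt_succ]
  cases p k <;> cases L k <;> simp [Nat.even_add, Nat.even_add_one, -Nat.not_even_iff_odd] <;>
    tauto

theorem eq_iff_flipLt_succ_iff (L p : ℕ → Bool) (k : ℕ) :
    L (k + 1) = p (k + 1) ↔ (FlipLt L p (k + 1) ↔ FlipLt L p k) := by
  rw [FlipLt, FlipLt, even_cnt_add_cnt_succ]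
  tauto

theorem eq_and_ne_of_flipLt_pattern {L p : ℕ → Bool} {φ : Prop} {a m : ℕ}
    (hlong : ∀ i ≤ m, FlipLt L p (a + i) ↔ φ) (hside : FlipLt L p (a + m + 1) ↔ ¬ φ)
    (hnext : FlipLt L p (a + m + 2) ↔ φ) :
    (∀ i, 1 ≤ i → i ≤ m → L (a + i) = p (a + i)) ∧
      L (a + m + 1) ≠ p (a + m + 1) ∧ L (a + m + 2) ≠ p (a + m + 2) := by
  refine ⟨fun i hi1 hi2 => ?_, ?_, ?_⟩
  · obtain ⟨i, rfl⟩ : ∃ i', i = i' + 1 := ⟨i - 1, by omega⟩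
    rw [← Nat.add_assoc, eq_iff_flipLt_succ_iff, Nat.add_assoc, hlong _ hi2, hlong i (by omega)]
  · rw [Ne, eq_iff_flipLt_succ_iff, hside, hlong m le_rfl]
    tauto
  · rw [Ne, eq_iff_flipLt_succ_iff, hnext, hside]
    tauto

end TwistedOrder

section Kneading

variable {ν : ℕ → Bool} {n : ℕ}

theorem nuWord_add (ν : ℕ → Bool) (s a b : ℕ) :
    nuWord ν s (a + b) = nuWord ν s a ++ nuWord ν (s + a) b := by
  simp [nuWord, List.range_add, Nat.add_assoc]

theorem nuWord_add_period (hper : ∀ k, ν (2 + k) = ν (2 + k % n)) (ℓ : ℕ) :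
    nuWord ν (2 + n) ℓ = nuWord ν 2 ℓ := by
  simp only [nuWord]
  refine List.map_congr_left fun i _ => ?_
  rw [Nat.add_assoc, hper, Nat.add_mod_left, ← hper]

theorem flatten_replicate_append_nuWord (hper : ∀ k, ν (2 + k) = ν (2 + k % n)) (T ℓ : ℕ) :
    (List.replicate T (nuWord ν 2 n)).flatten ++ nuWord ν 2 ℓ = nuWord ν 2 (T * n + ℓ) := by
  induction T with
  | zero => simp
  | succ T ih =>
    rw [List.replicate_succ, List.flatten_cons, List.append_assoc, ih,
      ← nuWord_add_period hper (T * n + ℓ), ← nuWord_add]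
    congr 1
    ring

theorem fwLong_eq (hper : ∀ k, ν (2 + k) = ν (2 + k % n)) {j : ℕ} (hj : j ≤ n + 2) (T r : ℕ) :
    fwLong ν n j T r = (!ν (j - 1)) :: nuWord ν j (n + 2 - j + (T * n + r)) := by
  rw [fwLong, List.append_assoc, flatten_replicate_append_nuWord hper,
    ← nuWord_add_period hper, show 2 + n = j + (n + 2 - j) by omega,
    List.append_assoc, ← nuWord_add]
  rfl

theorem fwSide_eq (hper : ∀ k, ν (2 + k) = ν (2 + k % n)) (T r : ℕ) :
    fwSide ν n T r = false :: nuWord ν 2 (T * n + r) := by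
  rw [fwSide, List.append_assoc, flatten_replicate_append_nuWord hper]
  rfl

theorem pseq_apply (hper : ∀ k, ν (2 + k) = ν (2 + k % n)) {r i m K : ℕ} (hm : 2 ≤ m)
    (h : m + i = r + 1 + K * n) : pseq ν n r i = ν m := by
  obtain ⟨m, rfl⟩ : ∃ m', m = 2 + m' := ⟨m - 2, by omega⟩
  rw [pseq, hper m]
  congr 2
  have : ((r : ℤ) - 1 - i) % n = ((m : ℤ) + (-K) * n) % n := by
    congr 1; linarith
  rw [this, Int.add_mul_emod_self_right, ← Int.natCast_mod, Int.toNat_natCast]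

end Kneading

section Departures

variable {ν : ℕ → Bool} {n : ℕ}

def HasAdmissibleDeparture (ν : ℕ → Bool) (w : List Bool) (p : ℕ → Bool) (k : ℕ) : Prop :=
  ∃ t, AdmissibleLeft ν t ∧ EndsWithWord t w ∧ (∀ i < k, t i = p i) ∧ t k ≠ p k

theorem hasAdmissibleDeparture_cons (h0 : ν 0 = true) (h1 : ν 1 = false)
    {b : Bool} {u : List Bool} (hw : AdmissibleWord ν (b :: u)) {p : ℕ → Bool} {k : ℕ}
    (hk : u.length = k) (hag : ∀ i < k, padTrue u i = p i) (hne : b ≠ p k) :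
    HasAdmissibleDeparture ν (b :: u) p k := by
  subst hk
  exact ⟨padTrue (b :: u), admissibleLeft_padTrue h0 h1 hw, endsWithWord_padTrue _,
    fun i hi => (padTrue_cons_of_lt hi).trans (hag i hi), by rwa [padTrue_cons_length]⟩

theorem padTrue_nuWord_eq_pseq (hper : ∀ k, ν (2 + k) = ν (2 + k % n)) {s ℓ r K : ℕ}
    (hs : 2 ≤ s) (h : s + ℓ = r + 2 + K * n) :
    ∀ i < ℓ, padTrue (nuWord ν s ℓ) i = pseq ν n r i := fun i hi => by
  rw [padTrue_nuWord hi, pseq_apply hper (m := s + (ℓ - 1 - i)) (K := K) (by omega) (by omega)]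

theorem hasAdmissibleDeparture_fwLong (hper : ∀ k, ν (2 + k) = ν (2 + k % n))
    (h0 : ν 0 = true) (h1 : ν 1 = false) {j T r : ℕ} (hj3 : 3 ≤ j) (hj : j ≤ n + 2)
    (hw : AdmissibleWord ν (fwLong ν n j T r)) :
    HasAdmissibleDeparture ν (fwLong ν n j T r) (pseq ν n r) (n + 2 - j + (T * n + r)) := by
  rw [fwLong_eq hper hj] at hw ⊢
  have hp : pseq ν n r (n + 2 - j + (T * n + r)) = ν (j - 1) :=
    pseq_apply hper (m := j - 1) (K := T + 1) (by omega) (by rw [Nat.succ_mul]; omega)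
  refine hasAdmissibleDeparture_cons h0 h1 hw (nuWord_length ..)
    (padTrue_nuWord_eq_pseq hper (K := T + 1) (by omega) (by rw [Nat.succ_mul]; omega)) ?_
  rw [hp]
  cases ν (j - 1) <;> simp

theorem hasAdmissibleDeparture_fwSide (hper : ∀ k, ν (2 + k) = ν (2 + k % n))
    (h0 : ν 0 = true) (h1 : ν 1 = false) (hν : AdmissibleSeq ν) (hn : 1 ≤ n)
    (hlast : ν (n + 1) = true) (T r : ℕ) :
    HasAdmissibleDeparture ν (fwSide ν n T r) (pseq ν n r) (T * n + r) := by
  have hw : AdmissibleWord ν (false :: nuWord ν 2 (T * n + r)) := by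
    simpa [nuWord_succ, h1] using hν 1 (T * n + r + 1)
  have hp : pseq ν n r (T * n + r) = true := by
    rw [pseq_apply hper (m := n + 1) (K := T + 1) (by omega) (by rw [Nat.succ_mul]; omega), hlast]
  rw [fwSide_eq hper]
  refine hasAdmissibleDeparture_cons h0 h1 hw (nuWord_length ..)
    (padTrue_nuWord_eq_pseq hper (K := T) le_rfl (by omega)) ?_
  simp [hp]

theorem HasAdmissibleDeparture.flipLt {L p : ℕ → Bool} {w : List Bool} {k : ℕ}
    (ht : HasAdmissibleDeparture ν w p k)
    (h : ∀ t, AdmissibleLeft ν t → EndsWithWord t w → ltL L t p) : FlipLt L p k := by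
  obtain ⟨t, htL, htw, hag, hne⟩ := ht
  exact (ltL_iff_flipLt hag hne).mp (h t htL htw)

theorem HasAdmissibleDeparture.not_flipLt {L p : ℕ → Bool} {w : List Bool} {k : ℕ}
    (ht : HasAdmissibleDeparture ν w p k)
    (h : ∀ t, AdmissibleLeft ν t → EndsWithWord t w → ltL L p t) : ¬ FlipLt L p k := by
  obtain ⟨t, htL, htw, hag, hne⟩ := ht
  exact (ltL_iff_not_flipLt hag hne).mp (h t htL htw)

end Departures

section Type3

variable {ν : ℕ → Bool} {n : ℕ}

/-- The long arc of `(j, T')` departs from `←p` at `n + 2 - j + (T' * n + r)`, the side arc of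
`T + 1` at `(T + 1) * n + r`. -/
theorem Type3Cond.exists_flipLt_pattern (hper : ∀ k, ν (2 + k) = ν (2 + k % n))
    (h0 : ν 0 = true) (h1 : ν 1 = false) (hν : AdmissibleSeq ν) (hn : 1 ≤ n)
    (hlast : ν (n + 1) = true) {L : ℕ → Bool} {r : ℕ}
    (hadm : ∀ j T, 3 ≤ j → j ≤ n + 1 → 1 ≤ T → AdmissibleWord ν (fwLong ν n j T r))
    (h : Type3Cond ν n L r) :
    ∃ φ : Prop, ∃ T, (∀ j T', T ≤ T' → 3 ≤ j → j ≤ n + 1 →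
      (FlipLt L (pseq ν n r) (n + 2 - j + (T' * n + r)) ↔ φ)) ∧
      (FlipLt L (pseq ν n r) ((T + 1) * n + r) ↔ ¬ φ) := by
  obtain ⟨M, -, h⟩ := h
  have hlong : ∀ j N, 1 ≤ N → 3 ≤ j → j ≤ n + 1 → AdmissibleWord ν (fwLong ν n j (M + N) r) ∧
      HasAdmissibleDeparture ν (fwLong ν n j (M + N) r) (pseq ν n r)
        (n + 2 - j + ((M + N) * n + r)) := fun j N _ hj3 hj =>
    have hw := hadm j (M + N) hj3 hj (by omega)
    ⟨hw, hasAdmissibleDeparture_fwLong hper h0 h1 hj3 (by omega) hw⟩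
  have hside := hasAdmissibleDeparture_fwSide hper h0 h1 hν hn hlast (r := r)
  rcases h with ⟨hl, hs, -⟩ | ⟨hl, hs, -⟩
  · obtain ⟨N, hN, -, hsN⟩ := hs 2
    refine ⟨True, M + N - 1, fun j T' hT' hj3 hj => iff_true_intro ?_, ?_⟩
    · obtain ⟨N', rfl⟩ := Nat.exists_eq_add_of_le (show M ≤ T' by omega)
      obtain ⟨hw, hdep⟩ := hlong j N' (by omega) hj3 hj
      exact hdep.flipLt (hl N' j (by omega) hj3 hj hw)
    · rw [show M + N - 1 + 1 = M + N by omega]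
      simpa using (hside _).not_flipLt hsN
  · obtain ⟨N, hN, -, hsN⟩ := hs 2
    refine ⟨False, M + N - 1, fun j T' hT' hj3 hj => iff_false_intro ?_, ?_⟩
    · obtain ⟨N', rfl⟩ := Nat.exists_eq_add_of_le (show M ≤ T' by omega)
      obtain ⟨hw, hdep⟩ := hlong j N' (by omega) hj3 hj
      exact hdep.not_flipLt (hl N' j (by omega) hj3 hj hw)
    · rw [show M + N - 1 + 1 = M + N by omega]
      simpa using (hside _).flipLt hsN

end Type3

section ForbiddenWord

variable {ν : ℕ → Bool} {n : ℕ}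

theorem leftWord_eq_nuWord {s : ℕ → Bool} {k c ℓ : ℕ}
    (h : ∀ i < ℓ, s (k + i) = ν (c + (ℓ - 1 - i))) : leftWord s k ℓ = nuWord ν c ℓ := by
  apply List.ext_getElem
  · simp [leftWord, nuWord_length]
  · intro i hi _
    simp only [leftWord, List.length_reverse, List.length_map, List.length_range] at hi
    simp [leftWord, nuWord, List.getElem_reverse, h _ (show ℓ - 1 - i < ℓ by omega)]
    congr 1
    omega

theorem leftWord_eq_of_flipLt_pattern (hper : ∀ k, ν (2 + k) = ν (2 + k % n)) (hn : 2 ≤ n)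
    (hc : ν n = true) (hlast : ν (n + 1) = true) {L : ℕ → Bool} {r T : ℕ} {φ : Prop}
    (hlong : ∀ j T', T ≤ T' → 3 ≤ j → j ≤ n + 1 →
      (FlipLt L (pseq ν n r) (n + 2 - j + (T' * n + r)) ↔ φ))
    (hside : FlipLt L (pseq ν n r) ((T + 1) * n + r) ↔ ¬ φ) :
    leftWord L (T * n + r + 2) n = [false, false] ++ nuWord ν 2 (n - 2) := by
  obtain ⟨m, rfl⟩ : ∃ m, n = m + 2 := ⟨n - 2, by omega⟩
  set a := T * (m + 2) + r + 1 with ha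
  obtain ⟨hmid, hY, hY1⟩ := eq_and_ne_of_flipLt_pattern (a := a) (m := m)
    (fun i hi => by
      have := hlong (m + 3 - i) T le_rfl (by omega) (by omega)
      rwa [show m + 2 + 2 - (m + 3 - i) + (T * (m + 2) + r) = a + i by omega] at this)
    (by rwa [show a + m + 1 = (T + 1) * (m + 2) + r by rw [ha, Nat.succ_mul]; omega])
    (by
      have := hlong (m + 3) (T + 1) (Nat.le_succ T) (by omega) le_rfl
      rwa [show m + 2 + 2 - (m + 3) + ((T + 1) * (m + 2) + r) = a + m + 2 by
        rw [ha, Nat.succ_mul]; omega] at this)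
  have hpY : pseq ν (m + 2) r (a + m + 1) = true :=
    (pseq_apply hper (m := m + 3) (K := T + 2) (by omega) (by rw [ha]; ring)).trans hlast
  have hpY1 : pseq ν (m + 2) r (a + m + 2) = true :=
    (pseq_apply hper (m := m + 2) (K := T + 2) hn (by rw [ha]; ring)).trans hc
  have hw : leftWord L (a + 1) m = nuWord ν 2 m := leftWord_eq_nuWord fun i hi => by
    rw [Nat.add_assoc, hmid _ (by omega) (by omega)]
    exact pseq_apply hper (K := T + 1) (by omega) (by rw [ha, Nat.succ_mul]; omega)
  simp only [ne_eq, hpY, hpY1, Bool.not_eq_true] at hY hY1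
  rw [show T * (m + 2) + r + 2 = a + 1 by omega, Nat.add_sub_cancel, leftWord_succ,
    leftWord_succ, hw, show a + 1 + (m + 1) = a + m + 2 by ring,
    show a + 1 + m = a + m + 1 by ring, hY1, hY]
  rfl

theorem plLt_false_cons_nuWord {s ℓ m : ℕ} (hm : m ≤ ℓ) (htrue : ν (s + m) = true)
    (hfalse : ∀ i < m, ν (s + i) = false) :
    plLt (false :: nuWord ν s ℓ) (nuWord ν s (ℓ + 1)) := by
  have hzero : ∀ k ≤ m, nuWord ν s k = List.replicate k false := fun k hk =>
    List.eq_replicate_iff.mpr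
      ⟨nuWord_length .., by simpa [nuWord] using fun i hi => hfalse i (by omega)⟩
  have htake : ∀ k ≤ m, (false :: nuWord ν s ℓ).take (k + 1) = List.replicate (k + 1) false :=
    fun k hk => by rw [List.take_succ_cons, nuWord_take, min_eq_left (by omega), hzero k hk]; rfl
  have hleft : (false :: nuWord ν s ℓ).getD m false = false := by
    rw [getD_eq_of_take_eq (t := List.replicate (m + 1) false) (Nat.lt_succ_self m)
      (by rw [htake m le_rfl, List.take_of_length_le (by simp)])]
    simp
  refine ⟨m, by simp [nuWord_length]; omega, by simp [nuWord_length]; omega, ?_, ?_, Or.inl ?_⟩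
  · rw [nuWord_take, min_eq_left (by omega), hzero m le_rfl]
    rcases m with _ | m
    · rfl
    · exact htake m (Nat.le_succ m)
  · rw [hleft, List.getD_eq_getElem?_getD]
    simp [nuWord, List.getElem?_range (show m < ℓ + 1 by omega), htrue]
  · refine ⟨hleft, ?_⟩
    rcases m with _ | m
    · simp
    · simp [htake m (Nat.le_succ m), List.count_replicate]

theorem not_admissibleWord_false_false (h1 : ν 1 = false) (hc : ν n = true) (hn : 2 ≤ n) :
    ¬ AdmissibleWord ν ([false, false] ++ nuWord ν 2 (n - 2)) := by
  have hw : [false, false] ++ nuWord ν 2 (n - 2) = false :: nuWord ν 1 (n - 1) := by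
    rw [show n - 1 = n - 2 + 1 by omega, nuWord_succ, h1]
    rfl
  have hcn : ν (1 + (n - 1)) = true := by rwa [show 1 + (n - 1) = n by omega]
  have hex : ∃ m, ν (1 + m) = true := ⟨n - 1, hcn⟩
  have hlt := plLt_false_cons_nuWord (Nat.find_le hcn) (Nat.find_spec hex)
    (fun i hi => by simpa using Nat.find_min hex hi)
  rw [hw]
  intro hA
  have hlo := (hA 0 (by simp)).1
  simp only [List.drop_zero, List.length_cons, nuWord_length, Nat.sub_zero] at hlo
  exact not_plLe_of_plLt hlt hlo

end ForbiddenWord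

theorem no_type3_of_cnplus1_one_general (ν : ℕ → Bool) (hν : AdmissibleSeq ν)
    (n : ℕ)
    (h0 : ν 0 = true) (h1 : ν 1 = false)
    (hper : ∀ k, ν (2 + k) = ν (2 + k % n))
    (hlast : ν (n + 1) = true)
    (hc : ν n = true)
    (hadm : ∀ j M r, 3 ≤ j → j ≤ n + 1 → 1 ≤ M → 1 ≤ r → r ≤ n →
      AdmissibleWord ν (fwLong ν n j M r)) :
    (∀ L : ℕ → Bool, AdmissibleLeft ν L → ∀ r, 1 ≤ r → r ≤ n →
        ¬ Type3Cond ν n L r) ∧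
      ¬ AdmissibleWord ν ([false, false] ++ nuWord ν 2 (n - 2)) := by
  have hn : 2 ≤ n := by
    rcases n with _ | _ | n
    · simp_all
    · simp_all
    · omega
  refine ⟨fun L hL r hr1 hr2 h3 => ?_, not_admissibleWord_false_false h1 hc hn⟩
  obtain ⟨φ, T, hlong, hside⟩ := h3.exists_flipLt_pattern hper h0 h1 hν (by omega) hlast
    fun j M hj3 hj hM => hadm j M r hj3 hj hM hr1 hr2
  have hLword := hL (T * n + r + 2) n
  rw [leftWord_eq_of_flipLt_pattern hper hn hc hlast hlong hside] at hLword
  exact not_admissibleWord_false_false h1 hc hn hLword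

/-- Let `ν = 10(c_3…c_{n+2})^∞` with `#₁(c_3…c_{n+2})` odd, `c_{n+2} = 1` and
`c_{n+1} = 1`, and suppose all the words
`c_j^*c_{j+1}…c_{n+2}(c_3…c_{n+2})^M c_3…c_i` are admissible. Then no choice of
`L` makes any folding point of `X'` a Type 3 folding point; in particular the
candidate sequence `L = (c_3…c_n00)^∞ l_k…l_1` contains the non-admissible
subword `00c_3…c_n`. -/
theorem no_type3_of_cnplus1_one (ν : ℕ → Bool) (hν : AdmissibleSeq ν)
    (n : ℕ) (hn : 1 ≤ n)
    (h0 : ν 0 = true) (h1 : ν 1 = false)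
    (hper : ∀ k, ν (2 + k) = ν (2 + k % n))
    (hlast : ν (n + 1) = true)
    (hodd : Odd ((nuWord ν 2 n).count true))
    (hc : ν n = true)
    (hadm : ∀ j M r, 3 ≤ j → j ≤ n + 1 → 1 ≤ M → 1 ≤ r → r ≤ n →
      AdmissibleWord ν (fwLong ν n j M r)) :
    (∀ L : ℕ → Bool, AdmissibleLeft ν L → ∀ r, 1 ≤ r → r ≤ n →
        ¬ Type3Cond ν n L r) ∧
      ¬ AdmissibleWord ν ([false, false] ++ nuWord ν 2 (n - 2)) :=
  no_type3_of_cnplus1_one_general ν hν n h0 h1 hper hlast hc hadm
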